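/- arXiv:2010.09195 — 3 statements merged into one kernel-verified Lean document; each statement's English description precedes it below -/
import Mathlib

section
/- For every fixed angle θ ∈ (0, π/2), the function d ↦ f(d, θ) is strictly increasing on the interval (0, L·cos θ]. (This is the first monotonicity claim of Lemma 1: ∂f(d, θ)/∂d > 0 for d ≤ L·cos θ.) -/
/-!
Since `d_b² = (d - L cos θ)² + (L sin θ)²`, the distance `d_b` decreases on `(0, L cos θ]`,
so `d_b^{ξ_L}` increases there because `ξ_L < 0`. At the same time the numerator of
`d sin θ / d_b` grows and its denominator shrinks, so the elevation angle `θ_b` increases, and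
with it the logistic LoS probability `p_b`. Both factors of `f` are positive, so `f` increases.
-/

/-- Distance from the UAV (at polar coordinates `(d, θ)` relative to Willie) to Bob. -/
noncomputable def db (L d θ : ℝ) : ℝ :=
  Real.sqrt (L ^ 2 + d ^ 2 - 2 * d * L * Real.cos θ)

/-- Elevation angle from Bob to the UAV (in radians). -/
noncomputable def θb (L d θ : ℝ) : ℝ :=
  Real.arcsin (d * Real.sin θ / db L d θ)

/-- Probability of a LoS component in the UAV-to-Bob channel. -/
noncomputable def pb (a b L d θ : ℝ) : ℝ :=
  1 / (1 + a * Real.exp (-b * ((180 / Real.pi) * θb L d θ - a)))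

/-- The objective `f(d, θ) = d_b^{ξ_L} · p_b`. -/
noncomputable def f (a b L ξL d θ : ℝ) : ℝ :=
  db L d θ ^ ξL * pb a b L d θ

open Real Set

section Geometry

variable {L d θ : ℝ}

lemma sq_mul_sin_le_sq_db_arg : (d * sin θ) ^ 2 ≤ L ^ 2 + d ^ 2 - 2 * d * L * cos θ := by
  nlinarith [sq_nonneg (L - d * cos θ), sin_sq_add_cos_sq θ]

lemma db_nonneg : 0 ≤ db L d θ :=
  sqrt_nonneg _

lemma abs_mul_sin_le_db : |d * sin θ| ≤ db L d θ :=
  abs_le_sqrt sq_mul_sin_le_sq_db_arg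

lemma db_pos (hd : d ≠ 0) (hθ : sin θ ≠ 0) : 0 < db L d θ :=
  (abs_pos.2 (mul_ne_zero hd hθ)).trans_le abs_mul_sin_le_db

lemma abs_mul_sin_div_db_le_one : |d * sin θ / db L d θ| ≤ 1 := by
  rw [abs_div, abs_of_nonneg db_nonneg]
  exact div_le_one_of_le₀ abs_mul_sin_le_db db_nonneg

lemma db_strictAntiOn : StrictAntiOn (fun d => db L d θ) (Iic (L * cos θ)) := by
  intro x hx y hy hxy
  simp only [mem_Iic] at hx hy
  refine sqrt_lt_sqrt ((sq_nonneg _).trans sq_mul_sin_le_sq_db_arg) ?_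
  nlinarith

lemma mul_sin_div_db_strictMonoOn (hθ : 0 < sin θ) :
    StrictMonoOn (fun d => d * sin θ / db L d θ) (Ioc 0 (L * cos θ)) := by
  intro x ⟨hx, hxc⟩ y ⟨hy, hyc⟩ hxy
  have hdbx : 0 < db L x θ := db_pos hx.ne' hθ.ne'
  have hdby : 0 < db L y θ := db_pos hy.ne' hθ.ne'
  calc x * sin θ / db L x θ < y * sin θ / db L x θ := by gcongr
    _ < y * sin θ / db L y θ := by
      gcongr
      exact db_strictAntiOn hxc hyc hxy

lemma θb_strictMonoOn (hθ : 0 < sin θ) :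
    StrictMonoOn (fun d => θb L d θ) (Ioc 0 (L * cos θ)) := fun _ hx _ hy hxy =>
  strictMonoOn_arcsin (abs_le.1 abs_mul_sin_div_db_le_one)
    (abs_le.1 abs_mul_sin_div_db_le_one) (mul_sin_div_db_strictMonoOn hθ hx hy hxy)

end Geometry

lemma strictMono_logistic {a b c : ℝ} (ha : 0 < a) (hb : 0 < b) (hc : 0 < c) :
    StrictMono fun t => 1 / (1 + a * exp (-b * (c * t - a))) := by
  intro s t hst
  have hexp : exp (-b * (c * t - a)) < exp (-b * (c * s - a)) :=
    exp_lt_exp.2 (by nlinarith [mul_pos hb (mul_pos hc (sub_pos.2 hst))])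
  exact one_div_lt_one_div_of_lt (by positivity) (by gcongr)

lemma pb_pos {a b L d θ : ℝ} (ha : 0 ≤ a) : 0 < pb a b L d θ := by
  unfold pb
  positivity

lemma pb_strictMonoOn {a b L θ : ℝ} (ha : 0 < a) (hb : 0 < b) (hθ : 0 < sin θ) :
    StrictMonoOn (fun d => pb a b L d θ) (Ioc 0 (L * cos θ)) :=
  (strictMono_logistic ha hb (by positivity)).comp_strictMonoOn (θb_strictMonoOn hθ)

theorem stmt_0_general (a b L ξL θ : ℝ) (ha : 0 < a) (hb : 0 < b)
    (hξ : ξL < 0) (hθ : θ ∈ Set.Ioo 0 (Real.pi / 2)) :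
    StrictMonoOn (fun d => f a b L ξL d θ) (Set.Ioc 0 (L * Real.cos θ)) := by
  have hsin : 0 < sin θ := sin_pos_of_pos_of_lt_pi hθ.1 (by linarith [hθ.2, pi_pos])
  intro x hx y hy hxy
  have hdb_pos : 0 < db L y θ := db_pos hy.1.ne' hsin.ne'
  have hdb_pow : db L x θ ^ ξL < db L y θ ^ ξL :=
    rpow_lt_rpow_of_neg hdb_pos (db_strictAntiOn hx.2 hy.2 hxy) hξ
  exact mul_lt_mul'' hdb_pow (pb_strictMonoOn ha hb hsin hx hy hxy)
    (rpow_nonneg db_nonneg _) (pb_pos ha.le).le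

/-- For fixed `θ ∈ (0, π/2)`, `d ↦ f(d, θ)` is strictly increasing on `(0, L·cos θ]`. -/
theorem stmt_0 (a b L ξL θ : ℝ) (ha : 0 < a) (hb : 0 < b) (hL : 0 < L)
    (hξ : ξL < 0) (hθ : θ ∈ Set.Ioo 0 (Real.pi / 2)) :
    StrictMonoOn (fun d => f a b L ξL d θ) (Set.Ioc 0 (L * Real.cos θ)) :=
  stmt_0_general a b L ξL θ ha hb hξ hθ
end

section
/- For every fixed d with 0 < d < L, the function θ ↦ p_b(d, θ) is strictly increasing on [0, arccos(d/L)] and strictly decreasing on [arccos(d/L), π/2]. (In the paper's Appendix B this follows from the sign of ∂p_b/∂θ, which equals the sign of G(θ) = (L² + d²)·cos θ − d·L·(1 + cos² θ) when d < L.) -/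
/-!
Write `c = cos θ`. For `θ ∈ [0, π]` the quantity `d sin θ / d_b = sin θ_b` is nonnegative and at
most `1`, and its square is `sinSqθb L d c = d² (1 - c²) / (L² + d² - 2 d L c)`. Since `p_b` is a
strictly increasing (logistic) function of `θ_b`, and `arcsin`, `√` are strictly increasing,
`p_b` moves in the same direction as `sinSqθb L d (cos θ)`. Clearing denominators,
`sinSqθb L d c₁ < sinSqθb L d c₂` iff `0 < (c₁ - c₂) S` with
`S = (L c₁ - d)(L - d c₂) + (L c₂ - d)(L - d c₁)` (the paper's `G(θ) = (L c - d)(L - d c)`,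
symmetrized), so `sinSqθb L d` increases for `c ≤ d / L` and decreases for `d / L ≤ c ≤ 1`.
Composing with the decreasing `cos` gives the two monotonicity claims.
-/

open Real Set

noncomputable def sinSqθb (L d c : ℝ) : ℝ :=
  d ^ 2 * (1 - c ^ 2) / (L ^ 2 + d ^ 2 - 2 * d * L * c)

section

variable {a b L d c c₁ c₂ θ θ₁ θ₂ : ℝ}

lemma sq_add_sq_sub_two_mul_pos (hd : 0 ≤ d) (hdL : d < L) (hc : c ≤ 1) :
    0 < L ^ 2 + d ^ 2 - 2 * d * L * c := by
  nlinarith [mul_nonneg (mul_nonneg hd (hd.trans hdL.le)) (sub_nonneg.2 hc),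
    pow_pos (sub_pos.2 hdL) 2]

lemma sinSqθb_lt_iff (hd : 0 < d) (hdL : d < L) (hc₁ : c₁ ≤ 1) (hc₂ : c₂ ≤ 1) :
    sinSqθb L d c₁ < sinSqθb L d c₂ ↔
      0 < (c₁ - c₂) * ((L * c₁ - d) * (L - d * c₂) + (L * c₂ - d) * (L - d * c₁)) := by
  have cross : d ^ 2 * (1 - c₂ ^ 2) * (L ^ 2 + d ^ 2 - 2 * d * L * c₁) -
      d ^ 2 * (1 - c₁ ^ 2) * (L ^ 2 + d ^ 2 - 2 * d * L * c₂) =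
      d ^ 2 * ((c₁ - c₂) * ((L * c₁ - d) * (L - d * c₂) + (L * c₂ - d) * (L - d * c₁))) := by
    ring
  rw [sinSqθb, sinSqθb, div_lt_div_iff₀ (sq_add_sq_sub_two_mul_pos hd.le hdL hc₁)
    (sq_add_sq_sub_two_mul_pos hd.le hdL hc₂), ← sub_pos, cross,
    mul_pos_iff_of_pos_left (by positivity)]

lemma sinSqθb_strictMonoOn (hd : 0 < d) (hdL : d < L) :
    StrictMonoOn (sinSqθb L d) (Iic (d / L)) := by
  intro c₁ (hc₁ : c₁ ≤ d / L) c₂ (hc₂ : c₂ ≤ d / L) h12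
  have hL : 0 < L := hd.trans hdL
  have hdL₁ : d / L < 1 := (div_lt_one hL).2 hdL
  rw [sinSqθb_lt_iff hd hdL (by linarith) (by linarith)]
  rw [le_div_iff₀ hL] at hc₁ hc₂
  refine mul_pos_of_neg_of_neg (by linarith) (add_neg_of_neg_of_nonpos ?_ ?_)
  · exact mul_neg_of_neg_of_pos (by nlinarith) (by nlinarith)
  · exact mul_nonpos_of_nonpos_of_nonneg (by linarith) (by nlinarith)

lemma sinSqθb_strictAntiOn (hd : 0 < d) (hdL : d < L) :
    StrictAntiOn (sinSqθb L d) (Icc (d / L) 1) := by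
  intro c₁ ⟨hc₁, hc₁'⟩ c₂ ⟨hc₂, hc₂'⟩ h12
  have hL : 0 < L := hd.trans hdL
  rw [div_le_iff₀ hL] at hc₁ hc₂
  rw [sinSqθb_lt_iff hd hdL hc₂' hc₁']
  refine mul_pos (by linarith) (add_pos_of_pos_of_nonneg ?_ ?_)
  · exact mul_pos (by nlinarith) (by nlinarith)
  · exact mul_nonneg (by linarith) (by nlinarith)

lemma sq_div_db (hd : 0 < d) (hdL : d < L) :
    (d * sin θ / db L d θ) ^ 2 = sinSqθb L d (cos θ) := by
  rw [div_pow, db, sq_sqrt (sq_add_sq_sub_two_mul_pos hd.le hdL (cos_le_one θ)).le, sinSqθb,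
    mul_pow, sin_sq]

lemma div_db_mem_Icc (hd : 0 < d) (hdL : d < L) (hs : 0 ≤ sin θ) :
    d * sin θ / db L d θ ∈ Icc 0 1 := by
  have hdb : 0 < db L d θ := sqrt_pos.2 (sq_add_sq_sub_two_mul_pos hd.le hdL (cos_le_one θ))
  refine ⟨by positivity, (div_le_one hdb).2 (le_sqrt_of_sq_le ?_)⟩
  -- `d_b² = (L - d cos θ)² + (d sin θ)²`
  nlinarith [sin_sq_add_cos_sq θ, sq_nonneg (L - d * cos θ)]

lemma pb_lt_pb_of_θb_lt (ha : 0 < a) (hb : 0 < b) (h : θb L d θ₁ < θb L d θ₂) :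
    pb a b L d θ₁ < pb a b L d θ₂ := by
  unfold pb
  have hexp : exp (-b * (180 / π * θb L d θ₂ - a)) < exp (-b * (180 / π * θb L d θ₁ - a)) := by
    rw [exp_lt_exp, neg_mul, neg_mul, neg_lt_neg_iff]
    gcongr
  gcongr

lemma pb_lt_pb_of_sinSqθb_lt (ha : 0 < a) (hb : 0 < b) (hd : 0 < d) (hdL : d < L)
    (hs₁ : 0 ≤ sin θ₁) (hs₂ : 0 ≤ sin θ₂)
    (h : sinSqθb L d (cos θ₁) < sinSqθb L d (cos θ₂)) :
    pb a b L d θ₁ < pb a b L d θ₂ := by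
  have hr₁ := div_db_mem_Icc (L := L) hd hdL hs₁
  have hr₂ := div_db_mem_Icc (L := L) hd hdL hs₂
  rw [← sq_div_db hd hdL, ← sq_div_db hd hdL,
    pow_lt_pow_iff_left₀ hr₁.1 hr₂.1 two_ne_zero] at h
  refine pb_lt_pb_of_θb_lt ha hb (strictMonoOn_arcsin ?_ ?_ h)
  · exact ⟨by linarith [hr₁.1], hr₁.2⟩
  · exact ⟨by linarith [hr₂.1], hr₂.2⟩

lemma strictMonoOn_pb {s : Set ℝ} (ha : 0 < a) (hb : 0 < b) (hd : 0 < d) (hdL : d < L)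
    (hs : s ⊆ Icc 0 π) (h : StrictMonoOn (sinSqθb L d ∘ cos) s) :
    StrictMonoOn (pb a b L d) s := fun _ h₁ _ h₂ h12 =>
  pb_lt_pb_of_sinSqθb_lt ha hb hd hdL (sin_nonneg_of_mem_Icc (hs h₁))
    (sin_nonneg_of_mem_Icc (hs h₂)) (h h₁ h₂ h12)

lemma strictAntiOn_pb {s : Set ℝ} (ha : 0 < a) (hb : 0 < b) (hd : 0 < d) (hdL : d < L)
    (hs : s ⊆ Icc 0 π) (h : StrictAntiOn (sinSqθb L d ∘ cos) s) :
    StrictAntiOn (pb a b L d) s := fun _ h₁ _ h₂ h12 =>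
  pb_lt_pb_of_sinSqθb_lt ha hb hd hdL (sin_nonneg_of_mem_Icc (hs h₂))
    (sin_nonneg_of_mem_Icc (hs h₁)) (h h₁ h₂ h12)

end

lemma mapsTo_cos_Icc_zero_arccos {x : ℝ} (hx₁ : -1 ≤ x) (hx₂ : x ≤ 1) :
    MapsTo cos (Icc 0 (arccos x)) (Icc x 1) := fun θ ⟨h₀, h⟩ =>
  ⟨cos_arccos hx₁ hx₂ ▸ strictAntiOn_cos.antitoneOn ⟨h₀, h.trans (arccos_le_pi x)⟩
    ⟨arccos_nonneg x, arccos_le_pi x⟩ h, cos_le_one θ⟩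

lemma mapsTo_cos_Icc_arccos_pi_div_two {x : ℝ} (hx₁ : -1 ≤ x) (hx₂ : x ≤ 1) :
    MapsTo cos (Icc (arccos x) (π / 2)) (Icc 0 x) := fun θ ⟨h, hπ⟩ =>
  have h₀ : 0 ≤ θ := (arccos_nonneg x).trans h
  ⟨cos_nonneg_of_mem_Icc ⟨by linarith [pi_pos], hπ⟩,
    cos_arccos hx₁ hx₂ ▸ strictAntiOn_cos.antitoneOn ⟨arccos_nonneg x, arccos_le_pi x⟩
      ⟨h₀, by linarith [pi_pos]⟩ h⟩

theorem stmt_7_general (a b L d : ℝ) (ha : 0 < a) (hb : 0 < b)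
    (hd : 0 < d) (hdL : d < L) :
    StrictMonoOn (fun θ => pb a b L d θ) (Set.Icc 0 (Real.arccos (d / L))) ∧
    StrictAntiOn (fun θ => pb a b L d θ) (Set.Icc (Real.arccos (d / L)) (Real.pi / 2)) := by
  have hL : 0 < L := hd.trans hdL
  have hx₀ : 0 ≤ d / L := by positivity
  have hx₁ : d / L ≤ 1 := (div_le_one hL).2 hdL.le
  have hsub₁ : Icc 0 (arccos (d / L)) ⊆ Icc 0 π := Icc_subset_Icc_right (arccos_le_pi _)
  have hsub₂ : Icc (arccos (d / L)) (π / 2) ⊆ Icc 0 π :=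
    Icc_subset_Icc (arccos_nonneg _) (by linarith [pi_pos])
  constructor
  · refine strictMonoOn_pb ha hb hd hdL hsub₁ ?_
    exact (sinSqθb_strictAntiOn hd hdL).comp (strictAntiOn_cos.mono hsub₁)
      (mapsTo_cos_Icc_zero_arccos (by linarith) hx₁)
  · refine strictAntiOn_pb ha hb hd hdL hsub₂ ?_
    exact (sinSqθb_strictMonoOn hd hdL).comp_strictAntiOn (strictAntiOn_cos.mono hsub₂)
      ((mapsTo_cos_Icc_arccos_pi_div_two (by linarith) hx₁).mono_right Icc_subset_Iic_self)

/-- For fixed `0 < d < L`, `θ ↦ p_b(d, θ)` is strictly increasing on `[0, arccos(d/L)]`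
and strictly decreasing on `[arccos(d/L), π/2]`. -/
theorem stmt_7 (a b L ξL d : ℝ) (ha : 0 < a) (hb : 0 < b) (hL : 0 < L)
    (hξ : ξL < 0) (hd : 0 < d) (hdL : d < L) :
    StrictMonoOn (fun θ => pb a b L d θ) (Set.Icc 0 (Real.arccos (d / L))) ∧
    StrictAntiOn (fun θ => pb a b L d θ) (Set.Icc (Real.arccos (d / L)) (Real.pi / 2)) :=
  stmt_7_general a b L d ha hb hd hdL
end

section
/- (Theorem 1, Scenario 1) Suppose 0 < θ̲ < π/2, 0 < d̲ < d̄, and d̄ ≤ L·cos θ̲. If (P*, d*, θ*) maximizes γ_b(P, d, θ) over all (P, d, θ) with 0 < P ≤ P_m, D01(P, d, θ) ≤ 2ε², d̲ ≤ d ≤ d̄, and θ̲ ≤ θ ≤ π/2 (where P_m > 0 and ε > 0), then d* = d̄ and θ̲ ≤ θ* ≤ arccos(d̄/L); this holds regardless of the value of the maximum transmit power P_m. -/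
/-- Effective SNR at Bob: `γ_b(P, d, θ) = P·f(d, θ)/σ_b²`. -/
noncomputable def γb (a b L ξL σb2 P d θ : ℝ) : ℝ :=
  P * f a b L ξL d θ / σb2

/-- Probability of a LoS component in the UAV-to-Willie channel. -/
noncomputable def pw (a b θ : ℝ) : ℝ :=
  1 / (1 + a * Real.exp (-b * ((180 / Real.pi) * θ - a)))

/-- Effective received power at Willie: `P̄(P, d, θ) = P·(d^{ξ_L}·p_w(θ) + d^{ξ_N})`. -/
noncomputable def Pbar (a b ξL ξN P d θ : ℝ) : ℝ :=
  P * (d ^ ξL * pw a b θ + d ^ ξN)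

/-- The KL divergence `D01(P, d, θ)`. -/
noncomputable def D01 (a b ξL ξN σw2 : ℝ) (n : ℕ) (P d θ : ℝ) : ℝ :=
  ((n : ℝ) / 2) * (Real.log ((Pbar a b ξL ξN P d θ + σw2) / σw2) -
    Pbar a b ξL ξN P d θ / (Pbar a b ξL ξN P d θ + σw2))



/-! Along a circle around Willie the elevation of the UAV seen from Bob is at most `arcsin (d / L)`
(law of sines: `d_b ≥ L sin θ`), with equality exactly where the angle Willie–UAV–Bob is right,
i.e. at `θ = arccos (d / L)`. Moving to a larger `d` or a smaller `θ` only lowers Willie's received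
power, so it keeps the covertness constraint. If `θ* > arccos (d̄ / L)`, the point
`(d̄, arccos (d̄ / L))` is then strictly closer to Bob and seen from him at least as high, hence
strictly better; so `d̄ ≤ L cos θ*`. On the segment `d ≤ L cos θ*` increasing `d` brings the UAV
closer to Bob and higher in his view, so if `d* < d̄` then `(d̄, θ*)` is strictly better. -/

open Real Set

lemma pw_pos {a : ℝ} (ha : 0 ≤ a) (b θ : ℝ) : 0 < pw a b θ := by
  unfold pw
  positivity

lemma pw_monotone {a b : ℝ} (ha : 0 ≤ a) (hb : 0 ≤ b) : Monotone (pw a b) := by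
  intro θ₁ θ₂ h
  unfold pw
  gcongr 1 / (1 + a * exp ?_)
  have : 0 ≤ b * (180 / π) * (θ₂ - θ₁) := by
    have := pi_pos
    have := sub_nonneg.2 h
    positivity
  linarith

lemma Pbar_nonneg {a P d : ℝ} (b ξL ξN : ℝ) (ha : 0 ≤ a) (hP : 0 ≤ P) (hd : 0 < d) (θ : ℝ) :
    0 ≤ Pbar a b ξL ξN P d θ := by
  have := pw_pos ha b θ
  unfold Pbar
  positivity

lemma Pbar_le_Pbar {a b ξL ξN P d d' θ θ' : ℝ} (ha : 0 ≤ a) (hb : 0 ≤ b) (hξL : ξL ≤ 0)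
    (hξN : ξN ≤ 0) (hP : 0 ≤ P) (hd : 0 < d) (hdd' : d ≤ d') (hθθ' : θ' ≤ θ) :
    Pbar a b ξL ξN P d' θ' ≤ Pbar a b ξL ξN P d θ := by
  unfold Pbar
  refine mul_le_mul_of_nonneg_left (add_le_add (mul_le_mul ?_ ?_ (pw_pos ha b θ').le ?_) ?_) hP
  · exact rpow_le_rpow_of_nonpos hd hdd' hξL
  · exact pw_monotone ha hb hθθ'
  · exact rpow_nonneg hd.le ξL
  · exact rpow_le_rpow_of_nonpos hd hdd' hξN

lemma monotoneOn_log_div_sub_div {σ : ℝ} (hσ : 0 < σ) :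
    MonotoneOn (fun x ↦ log ((x + σ) / σ) - x / (x + σ)) (Ici 0) := by
  intro x (hx : 0 ≤ x) y (hy : 0 ≤ y) hxy
  have hxσ : 0 < x + σ := by linarith
  have hyσ : 0 < y + σ := by linarith
  have hlog : 1 - (x + σ) / (y + σ) ≤ log ((y + σ) / σ) - log ((x + σ) / σ) := by
    rw [← log_div (by positivity) (by positivity), div_div_div_cancel_right₀ hσ.ne']
    simpa only [inv_div] using one_sub_inv_le_log_of_pos (div_pos hyσ hxσ)
  have hfrac : y / (y + σ) - x / (x + σ) ≤ 1 - (x + σ) / (y + σ) := by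
    rw [div_sub_div _ _ hyσ.ne' hxσ.ne', one_sub_div hyσ.ne', div_le_div_iff₀ (by positivity) hyσ]
    nlinarith [mul_nonneg (mul_nonneg (sub_nonneg.2 hxy) hyσ.le) hx]
  dsimp only
  linarith

lemma D01_le_D01 {a b ξL ξN σw2 P d d' θ θ' : ℝ} (n : ℕ) (ha : 0 ≤ a) (hb : 0 ≤ b)
    (hξL : ξL ≤ 0) (hξN : ξN ≤ 0) (hσw : 0 < σw2) (hP : 0 ≤ P) (hd : 0 < d) (hdd' : d ≤ d')
    (hθθ' : θ' ≤ θ) :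
    D01 a b ξL ξN σw2 n P d' θ' ≤ D01 a b ξL ξN σw2 n P d θ := by
  unfold D01
  gcongr ?_ * ?_
  exact monotoneOn_log_div_sub_div hσw (Pbar_nonneg b ξL ξN ha hP (hd.trans_le hdd') θ')
    (Pbar_nonneg b ξL ξN ha hP hd θ) (Pbar_le_Pbar ha hb hξL hξN hP hd hdd' hθθ')

lemma f_lt_f {a b L ξL d d' θ θ' : ℝ} (ha : 0 ≤ a) (hb : 0 ≤ b) (hξL : ξL < 0)
    (hpos : 0 < db L d' θ') (hdb : db L d' θ' < db L d θ) (hθb : θb L d θ ≤ θb L d' θ') :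
    f a b L ξL d θ < f a b L ξL d' θ' := by
  have hpw : pw a b (θb L d θ) ≤ pw a b (θb L d' θ') := pw_monotone ha hb hθb
  have := pw_pos ha b (θb L d θ)
  calc db L d θ ^ ξL * pw a b (θb L d θ)
      < db L d' θ' ^ ξL * pw a b (θb L d θ) :=
        mul_lt_mul_of_pos_right (rpow_lt_rpow_of_neg hpos hdb hξL) this
    _ ≤ db L d' θ' ^ ξL * pw a b (θb L d' θ') :=
        mul_le_mul_of_nonneg_left hpw (rpow_nonneg hpos.le ξL)

lemma γb_lt_γb {a b L ξL σb2 P d d' θ θ' : ℝ} (hP : 0 < P) (hσb : 0 < σb2)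
    (h : f a b L ξL d θ < f a b L ξL d' θ') :
    γb a b L ξL σb2 P d θ < γb a b L ξL σb2 P d' θ' := by
  unfold γb
  gcongr

lemma db_eq_sqrt (L d θ : ℝ) : db L d θ = √((d - L * cos θ) ^ 2 + (L * sin θ) ^ 2) := by
  unfold db
  congr 1
  linear_combination -L ^ 2 * sin_sq_add_cos_sq θ

lemma mul_sin_le_db (L d θ : ℝ) : L * sin θ ≤ db L d θ := by
  rw [db_eq_sqrt]
  exact (le_abs_self _).trans (abs_le_sqrt (le_add_of_nonneg_left (sq_nonneg _)))

lemma θb_le_arcsin {L d : ℝ} (hL : 0 < L) (hd : 0 ≤ d) (θ : ℝ) : θb L d θ ≤ arcsin (d / L) := by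
  unfold θb
  apply arcsin_le_arcsin
  have h0 : 0 ≤ db L d θ := sqrt_nonneg _
  rcases h0.eq_or_lt with h | h
  · rw [← h, div_zero]
    positivity
  · rw [div_le_div_iff₀ h hL]
    nlinarith [mul_le_mul_of_nonneg_left (mul_sin_le_db L d θ) hd]

lemma db_arccos {L d : ℝ} (hL : 0 < L) (hd : |d| ≤ L) :
    db L d (arccos (d / L)) = √(L ^ 2 - d ^ 2) := by
  obtain ⟨h₁, h₂⟩ := abs_le.1 hd
  rw [db, cos_arccos (by rwa [le_div_iff₀ hL, neg_one_mul]) (by rwa [div_le_one hL])]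
  congr 1
  field_simp
  ring

lemma θb_arccos {L d : ℝ} (hL : 0 < L) (hd : |d| < L) :
    θb L d (arccos (d / L)) = arcsin (d / L) := by
  have hpos : 0 < L ^ 2 - d ^ 2 := by nlinarith [sq_abs d, abs_nonneg d]
  have hsin : sin (arccos (d / L)) = √(L ^ 2 - d ^ 2) / L := by
    rw [sin_arccos, div_pow, one_sub_div (by positivity), sqrt_div' _ (by positivity),
      sqrt_sq hL.le]
  rw [θb, db_arccos hL hd.le, hsin]
  congr 1
  field_simp [(sqrt_pos.2 hpos).ne']

lemma db_lt_db_of_lt_of_le_mul_cos {L d d' θ : ℝ} (h : d < d') (h' : d' ≤ L * cos θ) :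
    db L d' θ < db L d θ := by
  rw [db_eq_sqrt, db_eq_sqrt]
  apply sqrt_lt_sqrt (by positivity)
  nlinarith

lemma θb_le_θb_of_le {L d d' θ : ℝ} (hd : 0 ≤ d) (h : d ≤ d') (hsin : 0 ≤ sin θ)
    (hpos : 0 < db L d' θ) (hdb : db L d' θ ≤ db L d θ) : θb L d θ ≤ θb L d' θ :=
  arcsin_le_arcsin <|
    div_le_div₀ (mul_nonneg (hd.trans h) hsin) (mul_le_mul_of_nonneg_right h hsin) hpos hdb

lemma db_arccos_lt_db {L d d' θ : ℝ} (hL : 0 < L) (hd : 0 < d) (hd' : |d'| ≤ L)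
    (h : L * cos θ < d') : db L d' (arccos (d' / L)) < db L d θ := by
  rw [db_arccos hL hd', db_eq_sqrt]
  apply sqrt_lt_sqrt (by nlinarith [sq_abs d', abs_nonneg d'])
  nlinarith [sin_sq_add_cos_sq θ, mul_lt_mul_of_pos_left h hd, sq_nonneg (d - d')]

lemma le_arccos_div_iff {L x θ : ℝ} (hL : 0 < L) (hx : |x| ≤ L) (hθ₀ : 0 ≤ θ) (hθ : θ ≤ π) :
    θ ≤ arccos (x / L) ↔ x ≤ L * cos θ := by
  obtain ⟨h₁, h₂⟩ := abs_le.1 hx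
  have hx₁ : -1 ≤ x / L := by rwa [le_div_iff₀ hL, neg_one_mul]
  have hx₂ : x / L ≤ 1 := by rwa [div_le_one hL]
  rw [← strictAntiOn_cos.le_iff_ge ⟨arccos_nonneg _, arccos_le_pi _⟩ ⟨hθ₀, hθ⟩, cos_arccos hx₁ hx₂,
    div_le_iff₀' hL]

lemma f_lt_f_of_lt_of_le_mul_cos {a b L ξL d d' θ : ℝ} (ha : 0 ≤ a) (hb : 0 ≤ b)
    (hξL : ξL < 0) (hL : 0 < L) (hd : 0 ≤ d) (h : d < d') (h' : d' ≤ L * cos θ)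
    (hsin : 0 < sin θ) : f a b L ξL d θ < f a b L ξL d' θ := by
  have hdb := db_lt_db_of_lt_of_le_mul_cos h h'
  have hpos : 0 < db L d' θ := (mul_pos hL hsin).trans_le (mul_sin_le_db L d' θ)
  exact f_lt_f ha hb hξL hpos hdb (θb_le_θb_of_le hd h.le hsin.le hpos hdb.le)

lemma f_lt_f_arccos {a b L ξL d d' θ : ℝ} (ha : 0 ≤ a) (hb : 0 ≤ b) (hξL : ξL < 0)
    (hL : 0 < L) (hd : 0 < d) (h : d ≤ d') (hd' : |d'| < L) (hcos : L * cos θ < d') :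
    f a b L ξL d θ < f a b L ξL d' (arccos (d' / L)) := by
  have hpos : 0 < db L d' (arccos (d' / L)) := by
    rw [db_arccos hL hd'.le]
    exact sqrt_pos.2 (by nlinarith [sq_abs d', abs_nonneg d'])
  refine f_lt_f ha hb hξL hpos (db_arccos_lt_db hL hd hd'.le hcos) ?_
  rw [θb_arccos hL hd']
  exact (θb_le_arcsin hL hd.le θ).trans (arcsin_le_arcsin (div_le_div_of_nonneg_right h hL.le))

theorem stmt_15_general (a b L ξL ξN σb2 σw2 Pm ε dlo dhi θlo : ℝ) (n : ℕ)
    (ha : 0 < a) (hb : 0 < b) (hL : 0 < L) (hξL : ξL < 0) (hξN : ξN < 0)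
    (hσb : 0 < σb2) (hσw : 0 < σw2)
    (hθlo : 0 < θlo)
    (hdlo : 0 < dlo) (hscen : dhi ≤ L * Real.cos θlo)
    (Pstar dstar θstar : ℝ)
    (hfeas : 0 < Pstar ∧ Pstar ≤ Pm ∧
      D01 a b ξL ξN σw2 n Pstar dstar θstar ≤ 2 * ε ^ 2 ∧
      dlo ≤ dstar ∧ dstar ≤ dhi ∧ θlo ≤ θstar ∧ θstar ≤ Real.pi / 2)
    (hopt : ∀ P d θ : ℝ,
      (0 < P ∧ P ≤ Pm ∧ D01 a b ξL ξN σw2 n P d θ ≤ 2 * ε ^ 2 ∧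
        dlo ≤ d ∧ d ≤ dhi ∧ θlo ≤ θ ∧ θ ≤ Real.pi / 2) →
      γb a b L ξL σb2 P d θ ≤ γb a b L ξL σb2 Pstar dstar θstar) :
    dstar = dhi ∧ θlo ≤ θstar ∧ θstar ≤ Real.arccos (dhi / L) := by
  obtain ⟨hP, hPm, hD, hdlo_le, hdhi_le, hθlo_le, hθ_le⟩ := hfeas
  have hd : 0 < dstar := hdlo.trans_le hdlo_le
  have hθ₀ : 0 < θstar := hθlo.trans_le hθlo_le
  have hθπ : θstar < π := hθ_le.trans_lt (by linarith [pi_pos])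
  have hθloπ : θlo ≤ π := hθlo_le.trans hθπ.le
  have hdhi : |dhi| < L := by
    have : cos θlo < 1 := by simpa using cos_lt_cos_of_nonneg_of_le_pi le_rfl hθloπ hθlo
    rw [abs_of_pos (hd.trans_le hdhi_le)]
    nlinarith
  have no_improvement : ∀ d θ, dstar ≤ d → d ≤ dhi → θlo ≤ θ → θ ≤ θstar →
      ¬f a b L ξL dstar θstar < f a b L ξL d θ := by
    intro d θ hd₁ hd₂ hθ₁ hθ₂ hf
    have hD' := (D01_le_D01 n ha.le hb.le hξL.le hξN.le hσw hP.le hd hd₁ hθ₂).trans hD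
    exact (hopt Pstar d θ ⟨hP, hPm, hD', hdlo_le.trans hd₁, hd₂, hθ₁, hθ₂.trans hθ_le⟩).not_gt
      (γb_lt_γb hP hσb hf)
  have hθ_iff := le_arccos_div_iff hL hdhi.le hθ₀.le hθπ.le
  have hcos : dhi ≤ L * cos θstar := by
    by_contra! h
    exact no_improvement dhi _ hdhi_le le_rfl
      ((le_arccos_div_iff hL hdhi.le hθlo.le hθloπ).2 hscen) (not_le.1 (hθ_iff.not.2 h.not_ge)).le
      (f_lt_f_arccos ha.le hb.le hξL hL hd hdhi_le hdhi h)
  refine ⟨?_, hθlo_le, hθ_iff.2 hcos⟩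
  by_contra hne
  exact no_improvement dhi θstar hdhi_le le_rfl hθlo_le le_rfl
    (f_lt_f_of_lt_of_le_mul_cos ha.le hb.le hξL hL hd.le (hdhi_le.lt_of_ne hne) hcos
      (sin_pos_of_pos_of_lt_pi hθ₀ hθπ))

/-- Theorem 1 (Scenario 1, `d̄ ≤ L·cos θ̲`): any maximizer `(P*, d*, θ*)` of
`γ_b` over the feasible set `{0 < P ≤ P_m, D01 ≤ 2ε², d̲ ≤ d ≤ d̄, θ̲ ≤ θ ≤ π/2}`
satisfies `d* = d̄` and `θ̲ ≤ θ* ≤ arccos(d̄/L)`, regardless of `P_m`. -/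
theorem stmt_15 (a b L ξL ξN σb2 σw2 Pm ε dlo dhi θlo : ℝ) (n : ℕ)
    (ha : 0 < a) (hb : 0 < b) (hL : 0 < L) (hξL : ξL < 0) (hξN : ξN < 0)
    (hn : 1 ≤ n) (hσb : 0 < σb2) (hσw : 0 < σw2)
    (hθlo : 0 < θlo) (hθlo' : θlo < Real.pi / 2)
    (hdlo : 0 < dlo) (hd : dlo < dhi) (hscen : dhi ≤ L * Real.cos θlo)
    (hPm : 0 < Pm) (hε : 0 < ε)
    (Pstar dstar θstar : ℝ)
    (hfeas : 0 < Pstar ∧ Pstar ≤ Pm ∧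
      D01 a b ξL ξN σw2 n Pstar dstar θstar ≤ 2 * ε ^ 2 ∧
      dlo ≤ dstar ∧ dstar ≤ dhi ∧ θlo ≤ θstar ∧ θstar ≤ Real.pi / 2)
    (hopt : ∀ P d θ : ℝ,
      (0 < P ∧ P ≤ Pm ∧ D01 a b ξL ξN σw2 n P d θ ≤ 2 * ε ^ 2 ∧
        dlo ≤ d ∧ d ≤ dhi ∧ θlo ≤ θ ∧ θ ≤ Real.pi / 2) →
      γb a b L ξL σb2 P d θ ≤ γb a b L ξL σb2 Pstar dstar θstar) :
    dstar = dhi ∧ θlo ≤ θstar ∧ θstar ≤ Real.arccos (dhi / L) :=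
  stmt_15_general a b L ξL ξN σb2 σw2 Pm ε dlo dhi θlo n ha hb hL hξL hξN hσb hσw hθlo hdlo hscen
    Pstar dstar θstar hfeas hopt
end
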